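/- γ' ≤ (2/n)(Var(S_n) − λ + λ²), where γ' = (2/(n²(n-1))) Σ_{(j,k) distinct} Σ_{(r,s) distinct} (p_{j,r}-p_{j,s})_+ (p_{k,s}-p_{k,r})_+, λ = ES_n, and S_n is the random diagonal sum. -/

import Mathlib

open Finset Real

/-- Probability weight of an outcome `x` of the Bernoulli matrix `(X_{j,r})` with
success probabilities `p`, the entries being independent. -/
noncomputable def bw (n : ℕ) (p : Fin n → Fin n → ℝ) (x : Fin n → Fin n → Bool) : ℝ :=
  ∏ j : Fin n, ∏ r : Fin n, if x j r then p j r else 1 - p j r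

/-- Expectation of `f (X, π)` where the Bernoulli matrix `X` (independent entries with
success probabilities `p`) and the uniformly distributed random permutation `π` are
independent. -/
noncomputable def dExp (n : ℕ) (p : Fin n → Fin n → ℝ)
    (f : (Fin n → Fin n → Bool) → Equiv.Perm (Fin n) → ℝ) : ℝ :=
  ((n.factorial : ℝ))⁻¹ *
    ∑ σ : Equiv.Perm (Fin n), ∑ x : Fin n → Fin n → Bool, bw n p x * f x σ

/-- The random diagonal sum `S_n = ∑ j, X_{j,π(j)}` as a function of the outcome. -/
noncomputable def dSum (n : ℕ) (x : Fin n → Fin n → Bool) (σ : Equiv.Perm (Fin n)) : ℝ :=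
  ∑ j : Fin n, if x j (σ j) then (1:ℝ) else 0

/-- The variance of the random diagonal sum `S_n`. -/
noncomputable def dVar (n : ℕ) (p : Fin n → Fin n → ℝ) : ℝ :=
  dExp n p (fun x σ => (dSum n x σ)^2) - (dExp n p (dSum n))^2

/-! Since `S_n² - S_n = ∑_{j ≠ k} X_{j,π j} X_{k,π k}` and, for `j ≠ k`, the pair `(π j, π k)` is
uniform on the ordered pairs of distinct columns,
`Var S_n - λ + λ² = E[S_n (S_n - 1)] = (n (n - 1))⁻¹ ∑_{j ≠ k, r ≠ s} p_{j,r} p_{k,s}`.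
The bound then holds term by term, since `(p_{j,r} - p_{j,s})₊ ≤ p_{j,r}` and
`(p_{k,s} - p_{k,r})₊ ≤ p_{k,s}` for nonnegative `p`. -/

section ProductWeight

variable {ι β R : Type*} [Fintype ι] [DecidableEq ι] [Fintype β] [CommSemiring R] {w : ι → β → R}

theorem sum_pi_prod_mul_prod (w g : ι → β → R) :
    ∑ x : ι → β, (∏ i, w i (x i)) * ∏ i, g i (x i) = ∏ i, ∑ b, w i b * g i b := by
  simp only [Fintype.prod_sum, ← Finset.prod_mul_distrib]

theorem sum_pi_prod_eq_one (hw : ∀ i, ∑ b, w i b = 1) :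
    ∑ x : ι → β, ∏ i, w i (x i) = 1 := by
  rw [← Fintype.prod_sum]; simp [hw]

theorem sum_pi_prod_mul_apply (hw : ∀ i, ∑ b, w i b = 1) (i : ι) (g : β → R) :
    ∑ x : ι → β, (∏ i, w i (x i)) * g (x i) = ∑ b, w i b * g b := by
  have h := sum_pi_prod_mul_prod w (fun i' b => if i' = i then g b else 1)
  rw [Fintype.prod_eq_single i (fun i' hi' => by simp [hi', hw])] at h
  simpa using h

theorem sum_pi_prod_mul_apply_mul_apply (hw : ∀ i, ∑ b, w i b = 1) {i i' : ι} (hi : i ≠ i')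
    (g h : β → R) :
    ∑ x : ι → β, (∏ i, w i (x i)) * (g (x i) * h (x i')) =
      (∑ b, w i b * g b) * ∑ b, w i' b * h b := by
  have key := sum_pi_prod_mul_prod w
    (fun k b => (if k = i then g b else 1) * (if k = i' then h b else 1))
  rw [Fintype.prod_eq_mul i i' hi (fun k hk => by simp [hk.1, hk.2, hw])] at key
  simp only [if_pos, if_neg hi, if_neg hi.symm, mul_one, one_mul] at key
  rw [← key]
  refine Finset.sum_congr rfl fun x _ => ?_
  rw [Finset.prod_mul_distrib, Finset.prod_ite_eq', Finset.prod_ite_eq']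
  simp

end ProductWeight

section Bernoulli

variable {ι R : Type*} [Fintype ι] [DecidableEq ι] [CommRing R]

theorem sum_bool_bernoulli (q : R) : ∑ b : Bool, (if b then q else 1 - q) = 1 := by
  simp

theorem sum_pi_bernoulli (q : ι → R) :
    ∑ y : ι → Bool, ∏ i, (if y i then q i else 1 - q i) = 1 :=
  sum_pi_prod_eq_one fun i => sum_bool_bernoulli (q i)

theorem sum_pi_bernoulli_mul_indicator (q : ι → R) (i : ι) :
    ∑ y : ι → Bool, (∏ i, (if y i then q i else 1 - q i)) * (if y i then 1 else 0) = q i :=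
  (sum_pi_prod_mul_apply (fun i => sum_bool_bernoulli (q i)) i fun b => if b then 1 else 0).trans
    (by simp)

end Bernoulli

section Permutation

open Equiv

-- `swap a a'` already sends `a` to `a'`; the second swap then moves the image of `b` to `b'`.
theorem exists_perm_apply_eq_and_apply_eq {α : Type*} [DecidableEq α] {a b a' b' : α}
    (hab : a ≠ b) (hab' : a' ≠ b') :
    ∃ τ : Perm α, τ a = a' ∧ τ b = b' := by
  refine ⟨swap (swap a a' b) b' * swap a a', ?_, by simp⟩
  have h := (swap a a').injective.ne hab
  rw [swap_apply_left] at h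
  simp [swap_apply_of_ne_of_ne h hab']

variable {α M : Type*} [Fintype α] [DecidableEq α] [AddCommMonoid M]

theorem sum_perm_apply_eq_sum_perm_apply (f : α → M) (a b : α) :
    ∑ σ : Perm α, f (σ a) = ∑ σ : Perm α, f (σ b) :=
  (Fintype.sum_equiv (Equiv.mulRight (swap a b)) _ _ (fun σ => by simp)).symm

theorem card_smul_sum_perm_apply (f : α → M) (a : α) :
    Fintype.card α • ∑ σ : Perm α, f (σ a) = (Fintype.card α).factorial • ∑ b, f b := by
  calc Fintype.card α • ∑ σ : Perm α, f (σ a)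
      = ∑ b : α, ∑ σ : Perm α, f (σ b) := by
        rw [← Finset.card_univ, ← Finset.sum_const]
        exact Finset.sum_congr rfl fun b _ => sum_perm_apply_eq_sum_perm_apply f a b
    _ = ∑ σ : Perm α, ∑ b, f b := by
        rw [Finset.sum_comm]
        exact Finset.sum_congr rfl fun σ _ => Equiv.sum_comp σ f
    _ = (Fintype.card α).factorial • ∑ b, f b := by
        rw [Finset.sum_const, Finset.card_univ, Fintype.card_perm]

theorem sum_perm_apply_apply_eq {a b a' b' : α} (hab : a ≠ b) (hab' : a' ≠ b')
    (F : α → α → M) :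
    ∑ σ : Perm α, F (σ a) (σ b) = ∑ σ : Perm α, F (σ a') (σ b') := by
  obtain ⟨τ, hτa, hτb⟩ := exists_perm_apply_eq_and_apply_eq hab hab'
  exact (Fintype.sum_equiv (Equiv.mulRight τ) _ _ (fun σ => by simp [hτa, hτb])).symm

theorem sum_ite_ne_const (c : M) :
    ∑ a : α, ∑ b : α, (if a ≠ b then c else 0) = (Fintype.card α * (Fintype.card α - 1)) • c := by
  simp [Finset.sum_ite, Finset.filter_ne, mul_smul]

theorem card_mul_pred_smul_sum_perm_apply_apply {a b : α} (hab : a ≠ b) (F : α → α → M) :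
    (Fintype.card α * (Fintype.card α - 1)) • ∑ σ : Perm α, F (σ a) (σ b) =
      (Fintype.card α).factorial • ∑ c, ∑ d, if c ≠ d then F c d else 0 := by
  calc (Fintype.card α * (Fintype.card α - 1)) • ∑ σ : Perm α, F (σ a) (σ b)
      = ∑ c : α, ∑ d : α, if c ≠ d then ∑ σ : Perm α, F (σ c) (σ d) else 0 := by
        rw [← sum_ite_ne_const (α := α)]
        refine Finset.sum_congr rfl fun c _ => Finset.sum_congr rfl fun d _ => ?_
        split_ifs with hcd
        · exact sum_perm_apply_apply_eq hab hcd F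
        · rfl
    _ = ∑ σ : Perm α, ∑ c, ∑ d, if c ≠ d then F (σ c) (σ d) else 0 := by
        simp only [ite_sum_zero]
        rw [Finset.sum_comm (s := (Finset.univ : Finset (Perm α)))]
        exact Finset.sum_congr rfl fun _ _ => Finset.sum_comm
    _ = ∑ σ : Perm α, ∑ c, ∑ d, if c ≠ d then F c d else 0 :=
        Finset.sum_congr rfl fun σ _ => Fintype.sum_equiv σ _ _ fun c =>
          Fintype.sum_equiv σ _ _ fun d => by simp only [ne_eq, EmbeddingLike.apply_eq_iff_eq]
    _ = _ := by rw [Finset.sum_const, Finset.card_univ, Fintype.card_perm]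

end Permutation

theorem sq_sum_sub_sum_eq_sum_ne_mul {ι R : Type*} [Fintype ι] [DecidableEq ι] [CommRing R]
    (e : ι → R) (he : ∀ i, e i * e i = e i) :
    (∑ i, e i) ^ 2 - ∑ i, e i = ∑ i, ∑ j, if i ≠ j then e i * e j else 0 := by
  have split : ∀ i j, e i * e j = (if i ≠ j then e i * e j else 0) + if i = j then e i else 0 := by
    intro i j
    by_cases hij : i = j <;> simp [hij, he]
  rw [sq, Finset.sum_mul_sum, Finset.sum_congr rfl fun i _ => Finset.sum_congr rfl fun j _ =>
    split i j]
  simp only [Finset.sum_add_distrib, Finset.sum_ite_eq, Finset.mem_univ, if_true]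
  ring

section DiagonalSum

variable {n : ℕ} (p : Fin n → Fin n → ℝ)

theorem sum_bw_mul_indicator (j r : Fin n) :
    ∑ x, bw n p x * (if x j r then 1 else 0) = p j r :=
  (sum_pi_prod_mul_apply (fun j => sum_pi_bernoulli (p j)) j _).trans
    (sum_pi_bernoulli_mul_indicator (p j) r)

theorem sum_bw_mul_indicator_mul_indicator {j k : Fin n} (hjk : j ≠ k) (r s : Fin n) :
    ∑ x, bw n p x * ((if x j r then 1 else 0) * (if x k s then 1 else 0)) = p j r * p k s :=
  (sum_pi_prod_mul_apply_mul_apply (fun j => sum_pi_bernoulli (p j)) hjk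
    (fun y => if y r then 1 else 0) (fun y => if y s then 1 else 0)).trans
    (by rw [sum_pi_bernoulli_mul_indicator, sum_pi_bernoulli_mul_indicator])

theorem dExp_sub (f g : (Fin n → Fin n → Bool) → Equiv.Perm (Fin n) → ℝ) :
    dExp n p (fun x σ => f x σ - g x σ) = dExp n p f - dExp n p g := by
  simp only [dExp, mul_sub, Finset.sum_sub_distrib]

theorem sum_bw_mul_dSum (σ : Equiv.Perm (Fin n)) :
    ∑ x, bw n p x * dSum n x σ = ∑ j, p j (σ j) := by
  simp only [dSum, Finset.mul_sum]
  rw [Finset.sum_comm]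
  exact Finset.sum_congr rfl fun j _ => sum_bw_mul_indicator p j (σ j)

omit p in
theorem dSum_sq_sub_dSum (x : Fin n → Fin n → Bool) (σ : Equiv.Perm (Fin n)) :
    dSum n x σ ^ 2 - dSum n x σ = ∑ j, ∑ k,
      if j ≠ k then (if x j (σ j) then 1 else 0) * (if x k (σ k) then 1 else 0) else 0 :=
  sq_sum_sub_sum_eq_sum_ne_mul _ fun j => by split_ifs <;> simp

theorem sum_bw_mul_dSum_sq_sub_dSum (σ : Equiv.Perm (Fin n)) :
    ∑ x, bw n p x * (dSum n x σ ^ 2 - dSum n x σ) =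
      ∑ j, ∑ k, if j ≠ k then p j (σ j) * p k (σ k) else 0 := by
  simp only [dSum_sq_sub_dSum, Finset.mul_sum]
  rw [Finset.sum_comm]
  refine Finset.sum_congr rfl fun j _ => ?_
  rw [Finset.sum_comm]
  refine Finset.sum_congr rfl fun k _ => ?_
  by_cases hjk : j ≠ k
  · simp only [if_pos hjk]
    exact sum_bw_mul_indicator_mul_indicator p hjk _ _
  · simp only [if_neg hjk, mul_zero, Finset.sum_const_zero]

theorem natCast_mul_dExp_dSum : (n : ℝ) * dExp n p (dSum n) = ∑ j, ∑ r, p j r := by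
  have hperm (j : Fin n) : (n : ℝ) * ∑ σ : Equiv.Perm (Fin n), p j (σ j) =
      n.factorial * ∑ r, p j r := by
    simpa using card_smul_sum_perm_apply (p j) j
  simp only [dExp, sum_bw_mul_dSum]
  rw [Finset.sum_comm, mul_left_comm, Finset.mul_sum]
  simp only [hperm, ← Finset.mul_sum]
  rw [inv_mul_cancel_left₀ (by positivity)]

theorem natCast_mul_sub_one_mul_dExp_dSum_sq_sub_dSum :
    (n : ℝ) * (n - 1) * dExp n p (fun x σ => dSum n x σ ^ 2 - dSum n x σ) =
      ∑ j, ∑ k, ∑ r, ∑ s, if j ≠ k ∧ r ≠ s then p j r * p k s else 0 := by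
  have hperm (j k : Fin n) :
      (n : ℝ) * (n - 1) * ∑ σ : Equiv.Perm (Fin n),
          (if j ≠ k then p j (σ j) * p k (σ k) else 0) =
        n.factorial * ∑ r, ∑ s, if j ≠ k ∧ r ≠ s then p j r * p k s else 0 := by
    by_cases hjk : j = k
    · simp [hjk]
    have := card_mul_pred_smul_sum_perm_apply_apply hjk (fun r s => p j r * p k s)
    simpa [hjk, Nat.cast_sub (j.pos : 1 ≤ n)] using this
  have hswap (f : Equiv.Perm (Fin n) → Fin n → Fin n → ℝ) :
      ∑ σ, ∑ j, ∑ k, f σ j k = ∑ j, ∑ k, ∑ σ, f σ j k := by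
    rw [Finset.sum_comm]
    exact Finset.sum_congr rfl fun j _ => Finset.sum_comm
  simp only [dExp, sum_bw_mul_dSum_sq_sub_dSum]
  rw [hswap, mul_left_comm, Finset.mul_sum]
  simp only [Finset.mul_sum (Finset.univ : Finset (Fin n)), hperm]
  simp only [← Finset.mul_sum]
  rw [inv_mul_cancel_left₀ (by positivity)]

end DiagonalSum

theorem max_zero_sub_mul_max_zero_sub_le_mul {a b c d : ℝ} (ha : 0 ≤ a) (hb : 0 ≤ b)
    (hc : 0 ≤ c) (hd : 0 ≤ d) : max 0 (a - b) * max 0 (c - d) ≤ a * c :=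
  mul_le_mul (max_le ha (by linarith)) (max_le hc (by linarith)) (le_max_left 0 _) ha

theorem gamma'_le_two_div_n_mul (n : ℕ) (hn : 2 ≤ n) (p : Fin n → Fin n → ℝ)
    (hp : ∀ j r, p j r ∈ Set.Icc (0:ℝ) 1)
    (lam : ℝ) (hlam_def : lam = (n:ℝ)⁻¹ * ∑ j : Fin n, ∑ r : Fin n, p j r) :
    (2 / ((n:ℝ)^2 * ((n:ℝ) - 1))) *
      ∑ j : Fin n, ∑ k : Fin n, ∑ r : Fin n, ∑ s : Fin n,
        (if j ≠ k ∧ r ≠ s then max 0 (p j r - p j s) * max 0 (p k s - p k r) else 0)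
    ≤ (2 / (n:ℝ)) * (dVar n p - lam + lam^2) := by
  have hn1 : (0 : ℝ) < n - 1 := by
    have : (2 : ℝ) ≤ n := by exact_mod_cast hn
    linarith
  have hmean : dExp n p (dSum n) = lam := by
    rw [hlam_def, ← natCast_mul_dExp_dSum, inv_mul_cancel_left₀ (by linarith)]
  have hfactorial : dVar n p - lam + lam ^ 2 =
      dExp n p (fun x σ => dSum n x σ ^ 2 - dSum n x σ) := by
    rw [dExp_sub, dVar, hmean]; ring
  calc (2 / ((n:ℝ)^2 * ((n:ℝ) - 1))) *
        ∑ j : Fin n, ∑ k : Fin n, ∑ r : Fin n, ∑ s : Fin n,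
          (if j ≠ k ∧ r ≠ s then max 0 (p j r - p j s) * max 0 (p k s - p k r) else 0)
      ≤ (2 / ((n:ℝ)^2 * ((n:ℝ) - 1))) *
        ∑ j : Fin n, ∑ k : Fin n, ∑ r : Fin n, ∑ s : Fin n,
          (if j ≠ k ∧ r ≠ s then p j r * p k s else 0) := by
        gcongr with j _ k _ r _ s _
        split_ifs
        · exact max_zero_sub_mul_max_zero_sub_le_mul (hp j r).1 (hp j s).1 (hp k s).1 (hp k r).1
        · rfl
    _ = (2 / (n:ℝ)) * (dVar n p - lam + lam^2) := by
        rw [hfactorial, ← natCast_mul_sub_one_mul_dExp_dSum_sq_sub_dSum]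
        field_simp [hn1.ne']
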